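/- arXiv:1307.3404 — 2 statements merged into one kernel-verified Lean document; each statement's English description precedes it below -/
import Mathlib

section
/- Among all tetrahedra with fixed root-mean-square edge length l_rms, the volume-length quality q = 6√2 · V / l_rms³ satisfies q ≤ 1, i.e., the volume of any tetrahedron satisfies V ≤ l_rms³/(6√2). -/
/-!
The vectors `b + c - a - d`, `b + d - a - c`, `a + b - c - d` are twice the bimedians of the
tetrahedron; they span a parallelepiped with four times the determinant of the edge vectors
`b - a, c - a, d - a`, and their squared lengths add up to the sum of the six squared edge
lengths. Hadamard's inequality followed by AM-GM bounds the squared determinant of the bimedians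
by the cube of a third of that sum, which is the claim after normalisation.
-/

open Matrix

lemma geom_mean_le_arith_mean3_pow {R : Type*} [CommRing R] [LinearOrder R]
    [IsStrictOrderedRing R] {p q r : R} (hp : 0 ≤ p) (hq : 0 ≤ q) (hr : 0 ≤ r) :
    27 * (p * q * r) ≤ (p + q + r) ^ 3 := by
  nlinarith [mul_nonneg hp (sq_nonneg (q - r)), mul_nonneg hq (sq_nonneg (p - r)),
    mul_nonneg hr (sq_nonneg (p - q)), mul_nonneg (add_nonneg hp hq) (sq_nonneg (p - q)),
    mul_nonneg (add_nonneg hq hr) (sq_nonneg (q - r)),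
    mul_nonneg (add_nonneg hp hr) (sq_nonneg (p - r))]

lemma sum_sq_eq_dotProduct {R n : Type*} [CommSemiring R] [Fintype n] (x : n → R) :
    ∑ i, x i ^ 2 = x ⬝ᵥ x := by
  simp only [dotProduct, sq]

section

variable {R : Type*} [CommRing R] [LinearOrder R] [IsStrictOrderedRing R]

lemma sum_sq_cross_le (y z : Fin 3 → R) :
    ∑ i, (y ⨯₃ z) i ^ 2 ≤ (∑ i, y i ^ 2) * ∑ i, z i ^ 2 := by
  simp only [sum_sq_eq_dotProduct, cross_dot_cross, dotProduct_comm z y]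
  exact sub_le_self _ (mul_self_nonneg _)

lemma det_sq_le_prod_sum_sq (x y z : Fin 3 → R) :
    (of ![x, y, z]).det ^ 2 ≤ (∑ i, x i ^ 2) * (∑ i, y i ^ 2) * ∑ i, z i ^ 2 := by
  calc (of ![x, y, z]).det ^ 2 = (∑ i, x i * (y ⨯₃ z) i) ^ 2 := by
        show det ![x, y, z] ^ 2 = _
        rw [← triple_product_eq_det]
        rfl
    _ ≤ (∑ i, x i ^ 2) * ∑ i, (y ⨯₃ z) i ^ 2 := Finset.sum_mul_sq_le_sq_mul_sq _ _ _
    _ ≤ (∑ i, x i ^ 2) * ((∑ i, y i ^ 2) * ∑ i, z i ^ 2) := by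
        gcongr
        exact sum_sq_cross_le y z
    _ = _ := (mul_assoc _ _ _).symm

end

lemma det_bimedians_eq_four_mul {R : Type*} [CommRing R] (a b c d : Fin 3 → R) :
    (of ![b + c - a - d, b + d - a - c, a + b - c - d]).det =
      4 * (of ![b - a, c - a, d - a]).det := by
  simp only [det_fin_three, of_apply, cons_val', cons_val_fin_one, cons_val_zero, cons_val_one,
    cons_val, Pi.add_apply, Pi.sub_apply]
  ring

lemma sum_sq_bimedians_eq_sum_sq_edges {R n : Type*} [CommRing R] [Fintype n]
    (a b c d : n → R) :
    (∑ i, (b i + c i - a i - d i) ^ 2) + (∑ i, (b i + d i - a i - c i) ^ 2)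
      + (∑ i, (a i + b i - c i - d i) ^ 2)
      = (∑ i, (a i - b i) ^ 2) + (∑ i, (a i - c i) ^ 2) + (∑ i, (a i - d i) ^ 2)
        + (∑ i, (b i - c i) ^ 2) + (∑ i, (b i - d i) ^ 2) + (∑ i, (c i - d i) ^ 2) := by
  simp only [← Finset.sum_add_distrib]
  exact Finset.sum_congr rfl fun i _ => by ring

lemma abs_div_six_le_sqrt_div_six_pow_three {D S : ℝ} (hS : 0 ≤ S) (h : 432 * D ^ 2 ≤ S ^ 3) :
    |D| / 6 ≤ √(S / 6) ^ 3 / (6 * √2) := by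
  have hsq : (√(S / 6) ^ 3 / (6 * √2)) ^ 2 = S ^ 3 / 15552 := by
    rw [div_pow, mul_pow, Real.sq_sqrt zero_le_two, ← pow_mul, mul_comm, pow_mul,
      Real.sq_sqrt (by positivity)]
    ring
  have key : |D / 6| ≤ √(S / 6) ^ 3 / (6 * √2) :=
    abs_le_of_sq_le_sq (by rw [hsq, div_pow]; linarith) (by positivity)
  rwa [abs_div, abs_of_pos (by norm_num : (0:ℝ) < 6)] at key

/-- The volume of any tetrahedron satisfies `V ≤ l_rms³/(6√2)`, i.e. the
volume-length quality `q = 6√2 · V / l_rms³` satisfies `q ≤ 1`.  Here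
`V = |det [b-a, c-a, d-a]|/6` is the unsigned volume and `l_rms` the root
mean square of the six (Euclidean) edge lengths. -/
theorem tetrahedron_volume_le (a b c d : Fin 3 → ℝ)
    (V lrms : ℝ)
    (hV : V = |(Matrix.of ![b - a, c - a, d - a]).det| / 6)
    (hlrms : lrms = Real.sqrt (((∑ i, (a i - b i) ^ 2) + (∑ i, (a i - c i) ^ 2)
      + (∑ i, (a i - d i) ^ 2) + (∑ i, (b i - c i) ^ 2)
      + (∑ i, (b i - d i) ^ 2) + (∑ i, (c i - d i) ^ 2)) / 6)) :
    V ≤ lrms ^ 3 / (6 * Real.sqrt 2) := by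
  rw [hV, hlrms, ← sum_sq_bimedians_eq_sum_sq_edges]
  refine abs_div_six_le_sqrt_div_six_pow_three (by positivity) ?_
  calc 432 * (of ![b - a, c - a, d - a]).det ^ 2
      = 27 * (of ![b + c - a - d, b + d - a - c, a + b - c - d]).det ^ 2 := by
        rw [det_bimedians_eq_four_mul]; ring
    _ ≤ 27 * ((∑ i, (b i + c i - a i - d i) ^ 2) * (∑ i, (b i + d i - a i - c i) ^ 2)
          * ∑ i, (a i + b i - c i - d i) ^ 2) := by
        gcongr
        exact det_sq_le_prod_sum_sq _ _ _
    _ ≤ _ := geom_mean_le_arith_mean3_pow (by positivity) (by positivity) (by positivity)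
end

section
/- Let S be a symmetric positive-definite n×n matrix and C an m×n matrix with CCᵀ invertible. Then S' = CᵀC + QᵀSQ, with Q = I − Cᵀ(CCᵀ)⁻¹C, is symmetric positive definite. -/
/-!
The quadratic form of `CᵀC + QᵀSQ` is `‖Cx‖² + (Qx)ᵀS(Qx)`, a sum of two nonnegative terms.
For `x ≠ 0`, either `Cx ≠ 0` and the first term is positive, or `Cx = 0`, in which case
`Qx = x` and the second term is `xᵀSx > 0`.
-/

open Matrix

namespace Matrix

variable {m n k R : Type*} [Fintype m] [Fintype n] [Fintype k]

section

variable [CommRing R] [StarRing R]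

lemma dotProduct_conjTranspose_mul_self_mulVec (C : Matrix m n R) (x : n → R) :
    star x ⬝ᵥ ((Cᴴ * C) *ᵥ x) = star (C *ᵥ x) ⬝ᵥ (C *ᵥ x) := by
  rw [← mulVec_mulVec, dotProduct_mulVec, star_mulVec, vecMul_conjTranspose, star_star]

lemma dotProduct_conjTranspose_mul_mul_mulVec (S : Matrix k k R) (Q : Matrix k n R)
    (x : n → R) :
    star x ⬝ᵥ ((Qᴴ * S * Q) *ᵥ x) = star (Q *ᵥ x) ⬝ᵥ (S *ᵥ (Q *ᵥ x)) := by
  rw [← mulVec_mulVec, ← mulVec_mulVec, dotProduct_mulVec, vecMul_conjTranspose, star_star]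

variable [PartialOrder R] [StarOrderedRing R] [NoZeroDivisors R]

theorem PosDef.conjTranspose_mul_self_add_conjTranspose_mul_mul {S : Matrix k k R}
    (hS : S.PosDef) (C : Matrix m n R) (Q : Matrix k n R)
    (hker : ∀ x, C *ᵥ x = 0 → Q *ᵥ x = 0 → x = 0) :
    (Cᴴ * C + Qᴴ * S * Q).PosDef := by
  have hsemi : (Cᴴ * C + Qᴴ * S * Q).PosSemidef :=
    (posSemidef_conjTranspose_mul_self C).add (hS.posSemidef.conjTranspose_mul_mul_same Q)
  refine PosDef.of_dotProduct_mulVec_pos hsemi.isHermitian fun x hx => ?_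
  rw [add_mulVec, dotProduct_add, dotProduct_conjTranspose_mul_self_mulVec,
    dotProduct_conjTranspose_mul_mul_mulVec]
  by_cases hCx : C *ᵥ x = 0
  · have hQx : Q *ᵥ x ≠ 0 := fun hQx => hx (hker x hCx hQx)
    exact add_pos_of_nonneg_of_pos (dotProduct_star_self_nonneg _) (hS.dotProduct_mulVec_pos hQx)
  · exact add_pos_of_pos_of_nonneg (dotProduct_star_self_pos_iff.mpr hCx)
      (hS.posSemidef.dotProduct_mulVec_nonneg _)

end

lemma one_sub_transpose_mul_mul_mulVec_of_mulVec_eq_zero [Ring R] [DecidableEq n]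
    {C : Matrix m n R} (M : Matrix m m R) {x : n → R} (hx : C *ᵥ x = 0) :
    (1 - Cᵀ * M * C) *ᵥ x = x := by
  rw [sub_mulVec, one_mulVec, ← mulVec_mulVec, hx, mulVec_zero, sub_zero]

end Matrix

theorem modified_hessian_posDef_general (m n : ℕ) (S : Matrix (Fin n) (Fin n) ℝ)
    (hS : S.PosDef) (C : Matrix (Fin m) (Fin n) ℝ)
    (Q : Matrix (Fin n) (Fin n) ℝ) (hQ : Q = 1 - Cᵀ * (C * Cᵀ)⁻¹ * C) :
    (Cᵀ * C + Qᵀ * S * Q).PosDef := by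
  have hker : ∀ x, C *ᵥ x = 0 → Q *ᵥ x = 0 → x = 0 := fun x hCx hQx => by
    rwa [hQ, one_sub_transpose_mul_mul_mulVec_of_mulVec_eq_zero _ hCx] at hQx
  simpa only [conjTranspose_eq_transpose_of_trivial] using
    hS.conjTranspose_mul_self_add_conjTranspose_mul_mul C Q hker

/-- If `S` is symmetric positive definite and `C` has `C Cᵀ` invertible
(full row rank), then `S' = CᵀC + QᵀSQ` with `Q = I − Cᵀ(CCᵀ)⁻¹C` is
symmetric positive definite. -/
theorem modified_hessian_posDef (m n : ℕ) (S : Matrix (Fin n) (Fin n) ℝ)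
    (hS : S.PosDef) (C : Matrix (Fin m) (Fin n) ℝ)
    (h : IsUnit (C * Cᵀ).det)
    (Q : Matrix (Fin n) (Fin n) ℝ) (hQ : Q = 1 - Cᵀ * (C * Cᵀ)⁻¹ * C) :
    (Cᵀ * C + Qᵀ * S * Q).PosDef :=
  modified_hessian_posDef_general m n S hS C Q hQ
end
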